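/- Let P be the uniform distribution on the unit square [0,1]² in ℝ². Then the halfspace depth satisfies HD((x,y);P) = 2·min{x,1−x}·min{y,1−y} for (x,y) ∈ [0,1]², and HD((x,y);P) = 0 otherwise. -/

import Mathlib

/-!
For `z = (x, y)` in the square, let `R` be the largest box centred at `z` inside the square; its
half-widths are `a = min x (1 - x)` and `b = min y (1 - y)`, so `|R| = 4ab`. The point reflection
about `z` preserves `R` and maps the part of `R` outside a closed halfplane containing `z` into the
part inside, so every such halfplane carries at least `|R| / 2 = 2ab`. Conversely, the line through
`z` and the two corners of `R` adjacent to the corner of the square nearest to `z` cuts off a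
triangle of the square lying in `R`; being bounded by a line through the centre of `R`, that
halfplane carries at most half of `R`. A point outside the square is separated from it by a
coordinate halfplane.
-/
open MeasureTheory
open scoped ENNReal RealInnerProductSpace

/-- The closed halfspace `{z : ⟪z, u⟫ ≤ α}` in `ℝ^d`. -/
def hsp (d : ℕ) (u : EuclideanSpace ℝ (Fin d)) (α : ℝ) :
    Set (EuclideanSpace ℝ (Fin d)) := {z | ⟪z, u⟫ ≤ α}

/-- The halfspace depth of `x` with respect to `P`. -/
noncomputable def HD {d : ℕ} (P : Measure (EuclideanSpace ℝ (Fin d)))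
    (x : EuclideanSpace ℝ (Fin d)) : ℝ≥0∞ :=
  ⨅ (u : EuclideanSpace ℝ (Fin d)) (_ : u ≠ 0) (α : ℝ) (_ : x ∈ hsp d u α),
    P (hsp d u α)

open Set

section PointReflection

variable {E : Type*} [NormedAddCommGroup E] [InnerProductSpace ℝ E] [MeasurableSpace E]
  [BorelSpace E]

theorem measure_inner_eq_eq_zero [FiniteDimensional ℝ E] (μ : Measure E) [μ.IsAddHaarMeasure]
    {u : E} (hu : u ≠ 0) (α : ℝ) : μ {w | ⟪w, u⟫ = α} = 0 := by
  set w₀ : E := (α / ⟪u, u⟫) • u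
  have hw₀ : ⟪u, w₀⟫ = α := by
    rw [real_inner_smul_right, div_mul_cancel₀ _ (inner_self_ne_zero.2 hu)]
  set H := AffineSubspace.mk' w₀ (LinearMap.ker (innerₛₗ ℝ u))
  have hH : {w | ⟪w, u⟫ = α} = H := by
    ext w
    simp [H, AffineSubspace.mem_mk', inner_sub_right, real_inner_comm, hw₀, sub_eq_zero]
  have hne : H ≠ ⊤ := by
    intro htop
    have : u +ᵥ w₀ ∈ H := htop ▸ AffineSubspace.mem_top ℝ E _
    simp [H, AffineSubspace.mem_mk', hu] at this
  rw [hH]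
  exact Measure.addHaar_affineSubspace μ H hne

section

variable (μ : Measure E) [μ.IsAddLeftInvariant] [μ.IsNegInvariant] {R : Set E} {z u : E} {α : ℝ}

theorem measure_diff_halfspace_le_inter (hR : ∀ w ∈ R, 2 • z - w ∈ R) (hz : ⟪z, u⟫ ≤ α) :
    μ (R \ {w | ⟪w, u⟫ ≤ α}) ≤ μ (R ∩ {w | ⟪w, u⟫ ≤ α}) := by
  have hmaps : R \ {w | ⟪w, u⟫ ≤ α} ⊆ (2 • z - ·) ⁻¹' (R ∩ {w | ⟪w, u⟫ ≤ α}) := by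
    rintro w ⟨hwR, hwH⟩
    refine ⟨hR w hwR, ?_⟩
    simp only [mem_ofPred_eq, not_le] at hwH ⊢
    rw [inner_sub_left, two_smul, inner_add_left]
    linarith
  calc μ (R \ {w | ⟪w, u⟫ ≤ α})
      ≤ μ ((2 • z - ·) ⁻¹' (R ∩ {w | ⟪w, u⟫ ≤ α})) := measure_mono hmaps
    _ = μ (R ∩ {w | ⟪w, u⟫ ≤ α}) :=
      (Measure.measurePreserving_sub_left μ (2 • z)).measure_preimage_equiv
        (f := MeasurableEquiv.subLeft (2 • z)) _

theorem measure_le_two_mul_measure_inter_halfspace (hR : ∀ w ∈ R, 2 • z - w ∈ R)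
    (hz : ⟪z, u⟫ ≤ α) : μ R ≤ 2 * μ (R ∩ {w | ⟪w, u⟫ ≤ α}) :=
  calc μ R ≤ μ (R ∩ {w | ⟪w, u⟫ ≤ α}) + μ (R \ {w | ⟪w, u⟫ ≤ α}) :=
        measure_le_inter_add_sdiff μ R _
    _ ≤ 2 * μ (R ∩ {w | ⟪w, u⟫ ≤ α}) := by
        rw [two_mul]; exact add_le_add le_rfl (measure_diff_halfspace_le_inter μ hR hz)

theorem two_mul_measure_inter_open_halfspace_le (hR : ∀ w ∈ R, 2 • z - w ∈ R)
    (hz : α ≤ ⟪z, u⟫) : 2 * μ (R ∩ {w | ⟪w, u⟫ < α}) ≤ μ R := by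
  have hle := measure_diff_halfspace_le_inter μ (u := -u) (α := -α) hR
    (by rwa [inner_neg_right, neg_le_neg_iff])
  have hlt : {w | ⟪w, -u⟫ ≤ -α} = {w | ⟪w, u⟫ < α}ᶜ := by
    ext w; simp [inner_neg_right]
  rw [hlt, sdiff_compl, ← sdiff_eq] at hle
  calc 2 * μ (R ∩ {w | ⟪w, u⟫ < α})
      ≤ μ (R ∩ {w | ⟪w, u⟫ < α}) + μ (R \ {w | ⟪w, u⟫ < α}) := by
        rw [two_mul]; exact add_le_add le_rfl hle
    _ = μ R := measure_inter_add_sdiff R (measurableSet_lt (by fun_prop) (by fun_prop))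

end

theorem two_mul_measure_inter_halfspace_le [FiniteDimensional ℝ E] (μ : Measure E)
    [μ.IsAddHaarMeasure] {R S : Set E} {z u : E} {α : ℝ} (hR : ∀ w ∈ R, 2 • z - w ∈ R)
    (hu : u ≠ 0) (hz : ⟪z, u⟫ = α) (hSR : S ∩ {w | ⟪w, u⟫ < α} ⊆ R) :
    2 * μ (S ∩ {w | ⟪w, u⟫ ≤ α}) ≤ μ R := by
  have hsub : S ∩ {w | ⟪w, u⟫ ≤ α} ⊆ R ∩ {w | ⟪w, u⟫ < α} ∪ {w | ⟪w, u⟫ = α} := by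
    rintro w ⟨hwS, hw⟩
    rcases (show ⟪w, u⟫ ≤ α from hw).lt_or_eq with hlt | heq
    · exact Or.inl ⟨hSR ⟨hwS, hlt⟩, hlt⟩
    · exact Or.inr heq
  calc 2 * μ (S ∩ {w | ⟪w, u⟫ ≤ α})
      ≤ 2 * μ (R ∩ {w | ⟪w, u⟫ < α}) := by
        gcongr 2 * ?_
        exact (measure_mono hsub).trans
          ((measure_union_le _ _).trans_eq (by rw [measure_inner_eq_eq_zero μ hu, add_zero]))
    _ ≤ μ R := two_mul_measure_inter_open_halfspace_le μ hR hz.ge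

end PointReflection

section Box

variable {ι : Type*}

def box (z : EuclideanSpace ℝ ι) (r : ι → ℝ) : Set (EuclideanSpace ℝ ι) :=
  {w | ∀ i, |w i - z i| ≤ r i}

theorem two_smul_sub_mem_box {z w : EuclideanSpace ℝ ι} {r : ι → ℝ} (hw : w ∈ box z r) :
    2 • z - w ∈ box z r := by
  intro i
  have hi : (2 • z - w) i - z i = -(w i - z i) := by simp [two_smul]; ring
  rw [hi, abs_neg]
  exact hw i

theorem volume_box [Fintype ι] (z : EuclideanSpace ℝ ι) (r : ι → ℝ) :
    volume (box z r) = ∏ i, ENNReal.ofReal (2 * r i) := by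
  have hbox : box z r = WithLp.ofLp ⁻¹' Icc (WithLp.ofLp z - r) (WithLp.ofLp z + r) := by
    ext w
    simp only [box, mem_ofPred_eq, mem_preimage, mem_Icc, Pi.le_def, Pi.sub_apply, Pi.add_apply,
      abs_sub_le_iff, ← forall_and]
    refine forall_congr' fun i => ?_
    constructor <;> rintro ⟨h₁, h₂⟩ <;> constructor <;> linarith
  rw [hbox, (PiLp.volume_preserving_ofLp ι).measure_preimage measurableSet_Icc.nullMeasurableSet,
    Real.volume_Icc_pi]
  congr with i
  simp only [Pi.add_apply, Pi.sub_apply]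
  ring_nf

end Box

section HalfspaceDepth

variable {d : ℕ}

theorem measurableSet_hsp (u : EuclideanSpace ℝ (Fin d)) (α : ℝ) : MeasurableSet (hsp d u α) :=
  measurableSet_le (by fun_prop) measurable_const

theorem HD_le_of_mem (P : Measure (EuclideanSpace ℝ (Fin d))) {x u : EuclideanSpace ℝ (Fin d)}
    {α : ℝ} (hu : u ≠ 0) (hx : x ∈ hsp d u α) : HD P x ≤ P (hsp d u α) :=
  iInf₂_le_of_le u hu (iInf₂_le_of_le α hx le_rfl)

theorem le_HD {P : Measure (EuclideanSpace ℝ (Fin d))} {x : EuclideanSpace ℝ (Fin d)}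
    {c : ℝ≥0∞} (h : ∀ u, u ≠ 0 → ∀ α, x ∈ hsp d u α → c ≤ P (hsp d u α)) : c ≤ HD P x :=
  le_iInf₂ fun u hu => le_iInf₂ fun α hx => h u hu α hx

theorem HD_restrict_eq_zero_of_notMem_Icc (μ : Measure (EuclideanSpace ℝ (Fin d)))
    {C : Set (EuclideanSpace ℝ (Fin d))} {z : EuclideanSpace ℝ (Fin d)} {i : Fin d} {a b : ℝ}
    (hC : ∀ w ∈ C, w i ∈ Icc a b) (hz : z i ∉ Icc a b) : HD (μ.restrict C) z = 0 := by
  obtain ⟨u, hu, α, hzu, hdisj⟩ : ∃ u ≠ 0, ∃ α, z ∈ hsp d u α ∧ ∀ w ∈ C, w ∉ hsp d u α := by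
    rcases not_and_or.1 hz with ha | hb
    · refine ⟨EuclideanSpace.single i 1, by simp, z i,
        by simp [hsp, EuclideanSpace.inner_single_right], fun w hw hwu => ha ?_⟩
      simp [hsp, EuclideanSpace.inner_single_right] at hwu
      linarith [(hC w hw).1]
    · refine ⟨EuclideanSpace.single i (-1), by simp, -z i,
        by simp [hsp, EuclideanSpace.inner_single_right], fun w hw hwu => hb ?_⟩
      simp [hsp, EuclideanSpace.inner_single_right] at hwu
      linarith [(hC w hw).2]
  refine le_antisymm ((HD_le_of_mem _ hu hzu).trans_eq ?_) bot_le
  rw [Measure.restrict_apply (measurableSet_hsp u α)]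
  exact measure_mono_null (fun w hw => hdisj w hw.2 hw.1) measure_empty

end HalfspaceDepth

section SymmetricSubset

variable {d : ℕ} {C R : Set (EuclideanSpace ℝ (Fin d))} {z : EuclideanSpace ℝ (Fin d)} {v : ℝ≥0∞}

theorem le_HD_restrict (hR : ∀ w ∈ R, 2 • z - w ∈ R) (hRC : R ⊆ C) (hv : volume R = 2 * v) :
    v ≤ HD (volume.restrict C) z := by
  refine le_HD fun u _ α hz => ?_
  rw [Measure.restrict_apply (measurableSet_hsp u α),
    ← ENNReal.mul_le_mul_iff_right two_ne_zero ENNReal.ofNat_ne_top, ← hv]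
  calc volume R ≤ 2 * volume (R ∩ hsp d u α) :=
        measure_le_two_mul_measure_inter_halfspace _ hR hz
    _ ≤ 2 * volume (hsp d u α ∩ C) := by
        gcongr 2 * volume ?_
        exact fun w hw => ⟨hw.2, hRC hw.1⟩

theorem HD_restrict_le {u : EuclideanSpace ℝ (Fin d)} (hR : ∀ w ∈ R, 2 • z - w ∈ R) (hu : u ≠ 0)
    (hCR : C ∩ {w | ⟪w, u⟫ < ⟪z, u⟫} ⊆ R) (hv : volume R = 2 * v) :
    HD (volume.restrict C) z ≤ v := by
  refine (HD_le_of_mem _ hu (le_refl ⟪z, u⟫)).trans ?_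
  rw [Measure.restrict_apply (measurableSet_hsp u _), inter_comm,
    ← ENNReal.mul_le_mul_iff_right two_ne_zero ENNReal.ofNat_ne_top, ← hv]
  exact two_mul_measure_inter_halfspace_le volume hR hu rfl hCR

end SymmetricSubset

theorem mem_Icc_of_abs_sub_le_min {c w : ℝ} (h : |w - c| ≤ min c (1 - c)) :
    w ∈ Icc (0 : ℝ) 1 := by
  rw [abs_le] at h
  constructor <;> linarith [min_le_left c (1 - c), min_le_right c (1 - c)]

theorem exists_abs_eq_one_forall_neg_min_le (c : ℝ) :
    ∃ s : ℝ, |s| = 1 ∧ ∀ w ∈ Icc (0 : ℝ) 1, -min c (1 - c) ≤ s * (w - c) := by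
  rcases le_total c (1 / 2) with hc | hc
  · refine ⟨1, abs_one, fun w hw => ?_⟩
    rw [min_eq_left (by linarith)]
    linarith [hw.1]
  · refine ⟨-1, by simp, fun w hw => ?_⟩
    rw [min_eq_right (by linarith)]
    linarith [hw.2]

/-- The line through `(a, b)` with normal `(b, a)` cuts the quadrant `[-a, ∞) × [-b, ∞)` in a
triangle inside `[-a, a] × [-b, b]`; a corner `a = b = 0` needs another normal. -/
theorem exists_ne_zero_forall_mul_add_mul_neg (a b : ℝ) (ha : 0 ≤ a) (hb : 0 ≤ b) :
    ∃ p q : ℝ, (p ≠ 0 ∨ q ≠ 0) ∧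
      ∀ s t, -a ≤ s → -b ≤ t → p * s + q * t < 0 → s ≤ a ∧ t ≤ b := by
  by_cases hab : a = 0 ∧ b = 0
  · obtain ⟨rfl, rfl⟩ := hab
    exact ⟨1, 1, Or.inl one_ne_zero, fun s t hs ht h => by constructor <;> linarith⟩
  · refine ⟨b, a, ?_, fun s t hs ht h => ⟨?_, ?_⟩⟩
    · tauto
    · nlinarith
    · nlinarith

def unitSquare : Set (EuclideanSpace ℝ (Fin 2)) :=
  {z | z 0 ∈ Icc (0 : ℝ) 1 ∧ z 1 ∈ Icc (0 : ℝ) 1}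

theorem volume_box_unitSquare {z : EuclideanSpace ℝ (Fin 2)} (hz : z ∈ unitSquare) :
    volume (box z fun i => min (z i) (1 - z i)) =
      2 * ENNReal.ofReal (2 * min (z 0) (1 - z 0) * min (z 1) (1 - z 1)) := by
  have h₀ : 0 ≤ min (z 0) (1 - z 0) := le_min hz.1.1 (by linarith [hz.1.2])
  have h₁ : 0 ≤ min (z 1) (1 - z 1) := le_min hz.2.1 (by linarith [hz.2.2])
  rw [volume_box, Fin.prod_univ_two, ← ENNReal.ofReal_mul (by positivity), mul_mul_mul_comm,
    mul_assoc, ENNReal.ofReal_mul zero_le_two, ENNReal.ofReal_ofNat, ← mul_assoc]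

theorem box_subset_unitSquare (z : EuclideanSpace ℝ (Fin 2)) :
    box z (fun i => min (z i) (1 - z i)) ⊆ unitSquare :=
  fun _ hw => ⟨mem_Icc_of_abs_sub_le_min (hw 0), mem_Icc_of_abs_sub_le_min (hw 1)⟩

theorem exists_unitSquare_inter_open_halfplane_subset_box {z : EuclideanSpace ℝ (Fin 2)}
    (hz : z ∈ unitSquare) : ∃ u ≠ 0,
      unitSquare ∩ {w | ⟪w, u⟫ < ⟪z, u⟫} ⊆ box z (fun i => min (z i) (1 - z i)) := by
  obtain ⟨s₀, hs₀, h₀⟩ := exists_abs_eq_one_forall_neg_min_le (z 0)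
  obtain ⟨s₁, hs₁, h₁⟩ := exists_abs_eq_one_forall_neg_min_le (z 1)
  obtain ⟨p, q, hpq, hcut⟩ := exists_ne_zero_forall_mul_add_mul_neg
    (min (z 0) (1 - z 0)) (min (z 1) (1 - z 1))
    (le_min hz.1.1 (by linarith [hz.1.2])) (le_min hz.2.1 (by linarith [hz.2.2]))
  have hs₀' : s₀ ≠ 0 := by rintro rfl; simp at hs₀
  have hs₁' : s₁ ≠ 0 := by rintro rfl; simp at hs₁
  refine ⟨!₂[s₀ * p, s₁ * q], fun h => ?_, ?_⟩
  · have h0 := congrArg (· 0) h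
    have h1 := congrArg (· 1) h
    simp at h0 h1
    tauto
  · rintro w ⟨⟨hw₀, hw₁⟩, hlt⟩
    have hlt' : p * (s₀ * (w 0 - z 0)) + q * (s₁ * (w 1 - z 1)) < 0 := by
      simp [PiLp.inner_apply, Fin.sum_univ_two] at hlt
      linarith
    obtain ⟨hle₀, hle₁⟩ := hcut _ _ (h₀ _ hw₀) (h₁ _ hw₁) hlt'
    intro i
    fin_cases i
    · simpa [abs_mul, hs₀] using abs_le.2 ⟨h₀ _ hw₀, hle₀⟩
    · simpa [abs_mul, hs₁] using abs_le.2 ⟨h₁ _ hw₁, hle₁⟩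

/-- The halfspace depth of the uniform distribution on the unit square `[0,1]²`. -/
theorem halfspace_depth_unit_square
    (P : Measure (EuclideanSpace ℝ (Fin 2)))
    (hP : P = volume.restrict
      {z : EuclideanSpace ℝ (Fin 2) | z 0 ∈ Set.Icc (0:ℝ) 1 ∧ z 1 ∈ Set.Icc (0:ℝ) 1}) :
    (∀ z : EuclideanSpace ℝ (Fin 2), z 0 ∈ Set.Icc (0:ℝ) 1 → z 1 ∈ Set.Icc (0:ℝ) 1 →
      HD P z = ENNReal.ofReal
        (2 * min (z 0) (1 - z 0) * min (z 1) (1 - z 1))) ∧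
    (∀ z : EuclideanSpace ℝ (Fin 2),
      ¬(z 0 ∈ Set.Icc (0:ℝ) 1 ∧ z 1 ∈ Set.Icc (0:ℝ) 1) → HD P z = 0) := by
  change P = volume.restrict unitSquare at hP
  subst hP
  refine ⟨fun z hx hy => ?_, fun z hz => ?_⟩
  · have hvol := volume_box_unitSquare (z := z) ⟨hx, hy⟩
    obtain ⟨u, hu, hcut⟩ := exists_unitSquare_inter_open_halfplane_subset_box ⟨hx, hy⟩
    exact le_antisymm (HD_restrict_le (fun _ => two_smul_sub_mem_box) hu hcut hvol)
      (le_HD_restrict (fun _ => two_smul_sub_mem_box) (box_subset_unitSquare z) hvol)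
  · rcases not_and_or.1 hz with h | h
    · exact HD_restrict_eq_zero_of_notMem_Icc volume (i := 0) (fun w hw => hw.1) h
    · exact HD_restrict_eq_zero_of_notMem_Icc volume (i := 1) (fun w hw => hw.2) h
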